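/- Let W, X, Y₁, Y₂ be finite-valued random variables on a common probability space such that Y₁ is conditionally independent of (Y₂, W) given X. Then I(W; Y₁ | Y₂) ≤ I(X; Y₁). -/

import Mathlib

open MeasureTheory Real

noncomputable section

namespace InterferenceRelay

variable {Ω : Type*} [MeasurableSpace Ω]

/-- The probability `P(X = x)` of a random variable `X` taking the value `x`. -/
def pr (μ : Measure Ω) {α : Type*} (X : Ω → α) (x : α) : ℝ :=
  (μ {ω | X ω = x}).toReal

/-- Shannon entropy `H(X)` (natural logarithm) of a finite-valued random variable. -/
def ent (μ : Measure Ω) {α : Type*} [Fintype α] (X : Ω → α) : ℝ :=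
  ∑ x : α, Real.negMulLog (pr μ X x)

/-- Conditional entropy `H(X | Y) = H(X, Y) - H(Y)`. -/
def condEnt (μ : Measure Ω) {α β : Type*} [Fintype α] [Fintype β]
    (X : Ω → α) (Y : Ω → β) : ℝ :=
  ent μ (fun ω => (X ω, Y ω)) - ent μ Y

/-- Mutual information `I(X ; Y) = H(X) - H(X | Y)`. -/
def mutInfo (μ : Measure Ω) {α β : Type*} [Fintype α] [Fintype β]
    (X : Ω → α) (Y : Ω → β) : ℝ :=
  ent μ X - condEnt μ X Y

/-- Conditional mutual information `I(X ; Y | Z) = H(X | Z) - H(X | (Y, Z))`. -/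
def condMutInfo (μ : Measure Ω) {α β γ : Type*} [Fintype α] [Fintype β] [Fintype γ]
    (X : Ω → α) (Y : Ω → β) (Z : Ω → γ) : ℝ :=
  condEnt μ X Z - condEnt μ X (fun ω => (Y ω, Z ω))

/-- `Y` is conditionally independent of `Z` given `X`, i.e. the Markov chain `Z − X − Y`
holds: `P(X = x, Y = y, Z = z) ⬝ P(X = x) = P(X = x, Y = y) ⬝ P(X = x, Z = z)`
for all values `x, y, z`. -/
def CondIndepGiven (μ : Measure Ω) {α β γ : Type*}
    (Y : Ω → β) (Z : Ω → γ) (X : Ω → α) : Prop :=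
  ∀ (x : α) (y : β) (z : γ),
    μ {ω | X ω = x ∧ Y ω = y ∧ Z ω = z} * μ {ω | X ω = x} =
      μ {ω | X ω = x ∧ Y ω = y} * μ {ω | X ω = x ∧ Z ω = z}

end InterferenceRelay

/-! Chain rule: `I(Y₁; (W, Y₂)) = I(Y₁; Y₂) + I(Y₁; W | Y₂) ≥ I(W; Y₁ | Y₂)`, and the
data-processing inequality for the Markov chain `(Y₂, W) − X − Y₁` bounds the left side by
`I(Y₁; X)`.

Nonnegativity of conditional mutual information, and its vanishing under conditional
independence, both come from writing `I(U; V | T)` as a sum over the values `c` of `T` of the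
mutual information of the unnormalized mass `(a, b) ↦ P(T = c, U = a, V = b)`, and comparing
each cell with the product of its marginals through `log x ≥ 1 - 1/x`. -/

namespace InterferenceRelay

open Finset

theorem sub_mul_div_le_mul_log_add_log_sub_log_sub_log {q r c t : ℝ} (hq : 0 ≤ q)
    (hqr : q ≤ r) (hqc : q ≤ c) (hqt : q ≤ t) :
    q - r * c / t ≤ q * (log q + log t - log r - log c) := by
  rcases hq.eq_or_lt with rfl | hq
  · have : 0 ≤ r * c / t := by positivity
    simp only [zero_mul]
    linarith
  have hr : 0 < r := hq.trans_le hqr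
  have hc : 0 < c := hq.trans_le hqc
  have ht : 0 < t := hq.trans_le hqt
  have key := Real.one_sub_inv_le_log_of_pos (x := q * t / (r * c)) (by positivity)
  rw [log_div (by positivity) (by positivity), log_mul hq.ne' ht.ne', log_mul hr.ne' hc.ne'] at key
  calc q - r * c / t = q * (1 - (q * t / (r * c))⁻¹) := by field_simp
    _ ≤ q * (log q + log t - log r - log c) := by
      rw [show log q + log t - log r - log c = log q + log t - (log r + log c) by ring]
      exact mul_le_mul_of_nonneg_left key hq.le

theorem mul_log_add_log_sub_log_sub_log_eq_zero {q r c t : ℝ} (hq : 0 ≤ q)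
    (hqr : q ≤ r) (hqc : q ≤ c) (h : q * t = r * c) :
    q * (log q + log t - log r - log c) = 0 := by
  rcases hq.eq_or_lt with rfl | hq
  · exact zero_mul _
  have hrc : r * c ≠ 0 := (mul_pos (hq.trans_le hqr) (hq.trans_le hqc)).ne'
  have ht : t ≠ 0 := right_ne_zero_of_mul (h ▸ hrc)
  have : log q + log t = log r + log c := by
    rw [← log_mul hq.ne' ht, h, log_mul (left_ne_zero_of_mul hrc) (right_ne_zero_of_mul hrc)]
  rw [show log q + log t - log r - log c = log q + log t - (log r + log c) by ring, this,
    sub_self, mul_zero]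

section Mass

variable {α β : Type*} [Fintype α] [Fintype β]

def mutInfoOfMass (q : α → β → ℝ) : ℝ :=
  ∑ a, negMulLog (∑ b, q a b) + ∑ b, negMulLog (∑ a, q a b)
    - ∑ a, ∑ b, negMulLog (q a b) - negMulLog (∑ a, ∑ b, q a b)

theorem mutInfoOfMass_eq_sum (q : α → β → ℝ) :
    mutInfoOfMass q = ∑ a, ∑ b, q a b *
      (log (q a b) + log (∑ a', ∑ b', q a' b') - log (∑ b', q a b') - log (∑ a', q a' b)) := by
  simp only [mutInfoOfMass, negMulLog, neg_mul, sum_neg_distrib, sum_mul, mul_add, mul_sub,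
    sum_add_distrib, sum_sub_distrib]
  rw [sum_comm (f := fun a b => q a b * log (∑ a', q a' b))]
  ring

theorem mutInfoOfMass_nonneg {q : α → β → ℝ} (hq : ∀ a b, 0 ≤ q a b) :
    0 ≤ mutInfoOfMass q := by
  set t := ∑ a, ∑ b, q a b
  have hrow : ∀ a b, q a b ≤ ∑ b', q a b' := fun a b =>
    single_le_sum (fun b' _ => hq a b') (mem_univ b)
  have hcol : ∀ a b, q a b ≤ ∑ a', q a' b := fun a b =>
    single_le_sum (fun a' _ => hq a' b) (mem_univ a)
  have htot : ∀ a b, q a b ≤ t := fun a b =>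
    (hrow a b).trans (single_le_sum (fun a' _ => sum_nonneg fun b' _ => hq a' b') (mem_univ a))
  have hsum : ∑ a, ∑ b, (q a b - (∑ b', q a b') * (∑ a', q a' b) / t) = 0 := by
    simp only [sum_sub_distrib, ← sum_div, ← sum_mul_sum]
    rw [sum_comm (f := fun b a => q a b), mul_self_div_self, sub_self]
  rw [mutInfoOfMass_eq_sum, ← hsum]
  exact sum_le_sum fun a _ => sum_le_sum fun b _ =>
    sub_mul_div_le_mul_log_add_log_sub_log_sub_log (hq a b) (hrow a b) (hcol a b) (htot a b)

theorem mutInfoOfMass_eq_zero {q : α → β → ℝ} (hq : ∀ a b, 0 ≤ q a b)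
    (h : ∀ a b, q a b * ∑ a', ∑ b', q a' b' = (∑ b', q a b') * ∑ a', q a' b) :
    mutInfoOfMass q = 0 := by
  rw [mutInfoOfMass_eq_sum]
  exact sum_eq_zero fun a _ => sum_eq_zero fun b _ =>
    mul_log_add_log_sub_log_sub_log_eq_zero (hq a b)
      (single_le_sum (fun b' _ => hq a b') (mem_univ b))
      (single_le_sum (fun a' _ => hq a' b) (mem_univ a)) (h a b)

end Mass

variable {Ω : Type*} [MeasurableSpace Ω] (μ : Measure Ω)
  {α β γ : Type*}

theorem pr_comp_equiv (e : α ≃ β) (X : Ω → α) (x : α) :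
    pr μ (fun ω => e (X ω)) (e x) = pr μ X x := by
  simp only [pr, e.apply_eq_iff_eq]

section Marginal

variable [IsFiniteMeasure μ] [MeasurableSpace α] [MeasurableSingletonClass α] [MeasurableSpace β]
  [MeasurableSingletonClass β] [MeasurableSpace γ] [MeasurableSingletonClass γ]

theorem pr_eq_sum_pr_prodMk [Fintype β] {X : Ω → α} {Y : Ω → β}
    (hXY : Measurable fun ω => (X ω, Y ω)) (x : α) :
    pr μ X x = ∑ y, pr μ (fun ω => (X ω, Y ω)) (x, y) := by
  have := sum_measureReal_preimage_singleton (μ := μ) ({x} ×ˢ univ)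
    fun p _ => hXY (measurableSet_singleton p)
  rw [sum_product, sum_singleton] at this
  simp only [Finset.coe_product, Finset.coe_singleton, Finset.coe_univ, Set.mk_preimage_prod,
    Set.preimage_univ, Set.inter_univ] at this
  exact this.symm

variable {U : Ω → α} {V : Ω → β} {T : Ω → γ}
  (hU : Measurable U) (hV : Measurable V) (hT : Measurable T)
include hU hV hT

theorem pr_eq_sum_sum_pr_prodMk [Fintype α] [Fintype β] (c : γ) :
    pr μ T c = ∑ a, ∑ b, pr μ (fun ω => (T ω, (U ω, V ω))) (c, (a, b)) := by
  rw [pr_eq_sum_pr_prodMk μ (hT.prodMk (hU.prodMk hV)), Fintype.sum_prod_type]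

theorem pr_prodMk_eq_sum_pr_prodMk_right [Fintype β] (c : γ) (a : α) :
    pr μ (fun ω => (T ω, U ω)) (c, a) = ∑ b, pr μ (fun ω => (T ω, (U ω, V ω))) (c, (a, b)) := by
  rw [pr_eq_sum_pr_prodMk μ ((hT.prodMk hU).prodMk hV)]
  exact sum_congr rfl fun b _ =>
    (pr_comp_equiv μ (Equiv.prodAssoc γ α β) (fun ω => ((T ω, U ω), V ω)) ((c, a), b)).symm

theorem pr_prodMk_eq_sum_pr_prodMk_left [Fintype α] (c : γ) (b : β) :
    pr μ (fun ω => (T ω, V ω)) (c, b) = ∑ a, pr μ (fun ω => (T ω, (U ω, V ω))) (c, (a, b)) := by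
  let e : (γ × β) × α ≃ γ × α × β :=
    ⟨fun p => (p.1.1, (p.2, p.1.2)), fun p => ((p.1, p.2.2), p.2.1), fun _ => rfl, fun _ => rfl⟩
  rw [pr_eq_sum_pr_prodMk μ ((hT.prodMk hV).prodMk hU)]
  exact sum_congr rfl fun a _ =>
    (pr_comp_equiv μ e (fun ω => ((T ω, V ω), U ω)) ((c, b), a)).symm

end Marginal

variable [Fintype α] [Fintype β] [Fintype γ]

theorem ent_comp_equiv (e : α ≃ β) (X : Ω → α) : ent μ (fun ω => e (X ω)) = ent μ X := by
  rw [ent, ent, ← e.sum_comp]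
  simp only [pr_comp_equiv]

theorem mutInfo_comm (X : Ω → α) (Y : Ω → β) : mutInfo μ X Y = mutInfo μ Y X := by
  have : ent μ (fun ω => (Y ω, X ω)) = ent μ (fun ω => (X ω, Y ω)) :=
    ent_comp_equiv μ (Equiv.prodComm α β) fun ω => (X ω, Y ω)
  simp only [mutInfo, condEnt]
  linarith

theorem mutInfo_comp_equiv_right (e : β ≃ γ) (X : Ω → α) (Y : Ω → β) :
    mutInfo μ X (fun ω => e (Y ω)) = mutInfo μ X Y := by
  have hY := ent_comp_equiv μ e Y
  have hXY := ent_comp_equiv μ ((Equiv.refl α).prodCongr e) fun ω => (X ω, Y ω)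
  simp only [mutInfo, condEnt] at hXY ⊢
  rw [hY, ← hXY]
  rfl

theorem condMutInfo_comm (X : Ω → α) (Y : Ω → β) (Z : Ω → γ) :
    condMutInfo μ X Y Z = condMutInfo μ Y X Z := by
  let e : α × β × γ ≃ β × α × γ :=
    ⟨fun p => (p.2.1, (p.1, p.2.2)), fun p => (p.2.1, (p.1, p.2.2)), fun _ => rfl, fun _ => rfl⟩
  have : ent μ (fun ω => (Y ω, (X ω, Z ω))) = ent μ (fun ω => (X ω, (Y ω, Z ω))) :=
    ent_comp_equiv μ e fun ω => (X ω, (Y ω, Z ω))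
  simp only [condMutInfo, condEnt]
  linarith

theorem mutInfo_prodMk_eq_mutInfo_add_condMutInfo (X : Ω → α) (Y : Ω → β) (Z : Ω → γ) :
    mutInfo μ X (fun ω => (Y ω, Z ω)) = mutInfo μ X Z + condMutInfo μ X Y Z := by
  simp only [mutInfo, condMutInfo, condEnt]
  ring

theorem ent_const [IsProbabilityMeasure μ] : ent μ (fun _ => ()) = 0 := by
  simp [ent, pr]

theorem mutInfo_eq_condMutInfo_const [IsProbabilityMeasure μ] (X : Ω → α) (Y : Ω → β) :
    mutInfo μ X Y = condMutInfo μ X Y fun _ => () := by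
  have hX : ent μ X = ent μ (fun ω => (X ω, ())) :=
    ent_comp_equiv μ (Equiv.prodPUnit α) fun ω => (X ω, ())
  have hY : ent μ Y = ent μ (fun ω => (Y ω, ())) :=
    ent_comp_equiv μ (Equiv.prodPUnit β) fun ω => (Y ω, ())
  have hXY : ent μ (fun ω => (X ω, Y ω)) = ent μ (fun ω => (X ω, (Y ω, ()))) :=
    ent_comp_equiv μ ((Equiv.refl α).prodCongr (Equiv.prodPUnit β)) fun ω => (X ω, (Y ω, ()))
  simp only [mutInfo, condMutInfo, condEnt, ent_const]
  rw [hX, hY, hXY]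
  ring

section Measurable

variable [MeasurableSpace α] [MeasurableSingletonClass α] [MeasurableSpace β]
  [MeasurableSingletonClass β] [MeasurableSpace γ] [MeasurableSingletonClass γ]

section Triple

variable [IsFiniteMeasure μ] {U : Ω → α} {V : Ω → β} {T : Ω → γ}
  (hU : Measurable U) (hV : Measurable V) (hT : Measurable T)
include hU hV hT

theorem condMutInfo_eq_sum_mutInfoOfMass :
    condMutInfo μ U V T =
      ∑ c, mutInfoOfMass fun a b => pr μ (fun ω => (T ω, (U ω, V ω))) (c, (a, b)) := by
  let e : γ × α × β ≃ α × β × γ :=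
    ⟨fun p => (p.2.1, (p.2.2, p.1)), fun p => (p.2.2, (p.1, p.2.1)), fun _ => rfl, fun _ => rfl⟩
  have hUVT : ent μ (fun ω => (U ω, (V ω, T ω))) = ent μ (fun ω => (T ω, (U ω, V ω))) :=
    ent_comp_equiv μ e fun ω => (T ω, (U ω, V ω))
  have hUT : ent μ (fun ω => (U ω, T ω)) = ent μ (fun ω => (T ω, U ω)) :=
    ent_comp_equiv μ (Equiv.prodComm γ α) fun ω => (T ω, U ω)
  have hVT : ent μ (fun ω => (V ω, T ω)) = ent μ (fun ω => (T ω, V ω)) :=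
    ent_comp_equiv μ (Equiv.prodComm γ β) fun ω => (T ω, V ω)
  simp only [condMutInfo, condEnt]
  rw [hUVT, hUT, hVT]
  simp only [mutInfoOfMass, ent, Fintype.sum_prod_type,
    pr_eq_sum_sum_pr_prodMk μ hU hV hT, pr_prodMk_eq_sum_pr_prodMk_right μ hU hV hT,
    pr_prodMk_eq_sum_pr_prodMk_left μ hU hV hT, sum_add_distrib, sum_sub_distrib]
  ring

theorem condMutInfo_nonneg : 0 ≤ condMutInfo μ U V T := by
  rw [condMutInfo_eq_sum_mutInfoOfMass μ hU hV hT]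
  exact sum_nonneg fun c _ => mutInfoOfMass_nonneg fun a b => ENNReal.toReal_nonneg

theorem condMutInfo_eq_zero_of_condIndepGiven (h : CondIndepGiven μ U V T) :
    condMutInfo μ U V T = 0 := by
  rw [condMutInfo_eq_sum_mutInfoOfMass μ hU hV hT]
  refine sum_eq_zero fun c _ => mutInfoOfMass_eq_zero (fun a b => ENNReal.toReal_nonneg)
    fun a b => ?_
  rw [← pr_eq_sum_sum_pr_prodMk μ hU hV hT, ← pr_prodMk_eq_sum_pr_prodMk_right μ hU hV hT,
    ← pr_prodMk_eq_sum_pr_prodMk_left μ hU hV hT]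
  simpa only [pr, Prod.mk.injEq, ENNReal.toReal_mul] using congrArg ENNReal.toReal (h c a b)

end Triple

theorem mutInfo_le_mutInfo_of_condIndepGiven [IsFiniteMeasure μ] {X : Ω → α} {Y : Ω → β}
    {Z : Ω → γ} (hX : Measurable X) (hY : Measurable Y) (hZ : Measurable Z)
    (h : CondIndepGiven μ Y Z X) : mutInfo μ Y Z ≤ mutInfo μ Y X :=
  calc mutInfo μ Y Z ≤ mutInfo μ Y Z + condMutInfo μ Y X Z :=
        le_add_of_nonneg_right (condMutInfo_nonneg μ hY hX hZ)
    _ = mutInfo μ Y (fun ω => (X ω, Z ω)) :=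
        (mutInfo_prodMk_eq_mutInfo_add_condMutInfo μ Y X Z).symm
    _ = mutInfo μ Y (fun ω => (Z ω, X ω)) :=
        (mutInfo_comp_equiv_right μ (Equiv.prodComm α γ) Y fun ω => (X ω, Z ω)).symm
    _ = mutInfo μ Y X + condMutInfo μ Y Z X := mutInfo_prodMk_eq_mutInfo_add_condMutInfo μ Y Z X
    _ = mutInfo μ Y X := by rw [condMutInfo_eq_zero_of_condIndepGiven μ hY hZ hX h, add_zero]

theorem mutInfo_nonneg [IsProbabilityMeasure μ] {X : Ω → α} {Y : Ω → β} (hX : Measurable X)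
    (hY : Measurable Y) : 0 ≤ mutInfo μ X Y :=
  mutInfo_eq_condMutInfo_const μ X Y ▸ condMutInfo_nonneg μ hX hY measurable_const

end Measurable

end InterferenceRelay

open InterferenceRelay in
/-- If the Markov chain `(Y₂, W) − X − Y₁` holds, then `I(W ; Y₁ | Y₂) ≤ I(X ; Y₁)`. -/
theorem condMutInfo_le_mutInfo_of_condIndep
    {Ω 𝒲 A B₁ B₂ : Type*} [MeasurableSpace Ω]
    [MeasurableSpace 𝒲] [MeasurableSingletonClass 𝒲] [Fintype 𝒲]
    [MeasurableSpace A] [MeasurableSingletonClass A] [Fintype A]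
    [MeasurableSpace B₁] [MeasurableSingletonClass B₁] [Fintype B₁]
    [MeasurableSpace B₂] [MeasurableSingletonClass B₂] [Fintype B₂]
    (μ : MeasureTheory.Measure Ω) [MeasureTheory.IsProbabilityMeasure μ]
    (W : Ω → 𝒲) (X : Ω → A) (Y₁ : Ω → B₁) (Y₂ : Ω → B₂)
    (hW : Measurable W) (hX : Measurable X) (hY₁ : Measurable Y₁) (hY₂ : Measurable Y₂)
    (h : CondIndepGiven μ Y₁ (fun ω => (Y₂ ω, W ω)) X) :
    condMutInfo μ W Y₁ Y₂ ≤ mutInfo μ X Y₁ :=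
  calc condMutInfo μ W Y₁ Y₂ = condMutInfo μ Y₁ W Y₂ := condMutInfo_comm μ W Y₁ Y₂
    _ ≤ mutInfo μ Y₁ (fun ω => (W ω, Y₂ ω)) := by
        rw [mutInfo_prodMk_eq_mutInfo_add_condMutInfo]
        exact le_add_of_nonneg_left (mutInfo_nonneg μ hY₁ hY₂)
    _ = mutInfo μ Y₁ (fun ω => (Y₂ ω, W ω)) :=
        mutInfo_comp_equiv_right μ (Equiv.prodComm B₂ 𝒲) Y₁ fun ω => (Y₂ ω, W ω)
    _ ≤ mutInfo μ Y₁ X := mutInfo_le_mutInfo_of_condIndepGiven μ hX hY₁ (hY₂.prodMk hW) h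
    _ = mutInfo μ X Y₁ := mutInfo_comm μ Y₁ X

end
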